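/- arXiv:1705.06319 — 2 statements merged into one kernel-verified Lean document; each statement's English description precedes it below -/
import Mathlib

section
/- Let g be a monotone submodular function on finite U with g(∅) = 0, and let S*, S_t ⊆ U. Let b : S* \ S_t → (S_t \ S*) ∪ {φ} be injective on the preimage of S_t \ S*. Then g(S*) − g(S_t) ≤ Σ_{x ∈ S* \ S_t} [ (g(S_t) − g(S_t \ {b(x)})) + (g((S_t \ {b(x)}) ∪ {x}) − g(S_t)) ]. -/
/-!
By monotonicity `g S* - g S_t ≤ g (S_t ∪ S*) - g S_t`, which submodularity bounds by the sum of
the marginal gains at `S_t` of the elements `x ∈ S* \ S_t`. Each summand of the claimed bound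
telescopes to the marginal gain of `x` at `S_t \ {b x} ⊆ S_t`, which dominates the gain at `S_t`.
-/

open Finset

section

variable {U : Type*} [DecidableEq U]

def IsSubmodular (g : Finset U → ℝ) : Prop :=
  ∀ A B : Finset U, g A + g B ≥ g (A ∪ B) + g (A ∩ B)

namespace IsSubmodular

variable {g : Finset U → ℝ}

theorem marginal_antitone (hg : IsSubmodular g) {A B : Finset U} {x : U} (hAB : A ⊆ B)
    (hx : x ∉ B) : g (insert x B) - g B ≤ g (insert x A) - g A := by
  have h := hg (insert x A) B
  rw [insert_union, union_eq_right.mpr hAB, insert_inter_of_notMem hx,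
    inter_eq_left.mpr hAB] at h
  linarith

theorem sub_le_sum_marginals (hg : IsSubmodular g) (S T : Finset U) (hST : Disjoint S T) :
    g (S ∪ T) - g S ≤ ∑ x ∈ T, (g (insert x S) - g S) := by
  induction T using Finset.induction_on with
  | empty => simp
  | insert a T haT ih =>
    rw [disjoint_insert_right] at hST
    have hstep : g (S ∪ insert a T) - g (S ∪ T) ≤ g (insert a S) - g S := by
      rw [union_insert]
      exact hg.marginal_antitone subset_union_left (by simp [hST.1, haT])
    rw [sum_insert haT]
    linarith [ih hST.2]

end IsSubmodular

theorem Option.elim_erase_subset (o : Option U) (s : Finset U) :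
    o.elim s (fun y => s.erase y) ⊆ s := by
  cases o <;> simp [erase_subset]

end

theorem stmt_12_general {U : Type*} [DecidableEq U] (g : Finset U → ℝ)
    (hmono : ∀ A B : Finset U, A ⊆ B → g A ≤ g B)
    (hsub : ∀ A B : Finset U, g A + g B ≥ g (A ∪ B) + g (A ∩ B))
    (Sstar St : Finset U) (b : U → Option U) :
    g Sstar - g St ≤
      ∑ x ∈ Sstar \ St,
        ((g St - g ((b x).elim St (fun y => St.erase y))) +
          (g (insert x ((b x).elim St (fun y => St.erase y))) - g St)) := by
  have hg : IsSubmodular g := hsub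
  calc g Sstar - g St ≤ g (St ∪ Sstar \ St) - g St := by
        rw [union_sdiff_self_eq_union]
        linarith [hmono _ _ (subset_union_right : Sstar ⊆ St ∪ Sstar)]
    _ ≤ ∑ x ∈ Sstar \ St, (g (insert x St) - g St) :=
        hg.sub_le_sum_marginals St _ disjoint_sdiff
    _ ≤ _ := by
        refine sum_le_sum fun x hx => ?_
        have := hg.marginal_antitone ((b x).elim_erase_subset St) (mem_sdiff.mp hx).2
        linarith

/-- Inequality (3): for monotone submodular `g` with `g(∅) = 0` and an
injective-type mapping `b : S* \ S_t → (S_t \ S*) ∪ {φ}` (with `none` as `φ`),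
`g(S*) − g(S_t)` is at most the sum over `x ∈ S* \ S_t` of the removal loss
plus the swap gain. -/
theorem stmt_12 {U : Type*} [Fintype U] [DecidableEq U] (g : Finset U → ℝ)
    (hmono : ∀ A B : Finset U, A ⊆ B → g A ≤ g B)
    (hsub : ∀ A B : Finset U, g A + g B ≥ g (A ∪ B) + g (A ∩ B))
    (hempty : g ∅ = 0)
    (Sstar St : Finset U) (b : U → Option U)
    (himg : ∀ x ∈ Sstar \ St, ∀ y, b x = some y → y ∈ St \ Sstar)
    (hinj : ∀ y ∈ St \ Sstar, ∀ x₁ ∈ Sstar \ St, ∀ x₂ ∈ Sstar \ St,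
      b x₁ = some y → b x₂ = some y → x₁ = x₂) :
    g Sstar - g St ≤
      ∑ x ∈ Sstar \ St,
        ((g St - g ((b x).elim St (fun y => St.erase y))) +
          (g (insert x ((b x).elim St (fun y => St.erase y))) - g St)) :=
  stmt_12_general g hmono hsub Sstar St b
end

section
/- Let g be a monotone submodular function with g(∅) = 0 on finite U, and k ≥ 1. Suppose S*, S_t ⊆ U, costs c_x ≥ 0 with Σ_{x ∈ S* \ S_t} c_x ≤ C, a mapping b : S* \ S_t → {subsets of S_t \ S* of size ≤ k} with each element of S_t \ S* in at most k images, and for each x ∈ S* \ S_t, g((S_t \ b(x)) ∪ {x}) − g(S_t) ≤ c_x · ρ for some ρ ≥ 0. Then g(S*) ≤ (k+1)·g(S_t) + C·ρ. -/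
/-!
Adding `S* \ S_t` to `S_t` raises `g` by at most the sum of the single-element
gains `g(S_t + x) - g(S_t)`. By submodularity each such gain is at most the gain of the swap
`(S_t \ b x) + x`, which is `≤ c x · ρ`, plus the loss `g(S_t) - g(S_t \ b x)`. Since every
element of `S_t` lies in at most `k` of the sets `b x`, the losses add up to at most `k · g(S_t)`:
peel off the elements of `S_t` one by one, and charge each to the at most `k` sets containing it.
-/

open Finset

section
variable {U : Type*} [DecidableEq U] {g : Finset U → ℝ}

theorem marginal_antitone (hmono : ∀ A B : Finset U, A ⊆ B → g A ≤ g B)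
    (hsub : ∀ A B : Finset U, g A + g B ≥ g (A ∪ B) + g (A ∩ B))
    {A B : Finset U} (hAB : A ⊆ B) (x : U) :
    g (insert x B) - g B ≤ g (insert x A) - g A := by
  by_cases hx : x ∈ B
  · rw [insert_eq_of_mem hx]
    linarith [hmono A (insert x A) (subset_insert x A)]
  · have hunion : insert x A ∪ B = insert x B := by
      rw [insert_union, union_eq_right.2 hAB]
    have hinter : insert x A ∩ B = A := by
      rw [insert_inter_of_notMem hx, inter_eq_left.2 hAB]
    have := hsub (insert x A) B
    rw [hunion, hinter] at this
    linarith

theorem sub_le_sum_marginal (hmono : ∀ A B : Finset U, A ⊆ B → g A ≤ g B)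
    (hsub : ∀ A B : Finset U, g A + g B ≥ g (A ∪ B) + g (A ∩ B)) (A T : Finset U) :
    g (A ∪ T) - g A ≤ ∑ x ∈ T, (g (insert x A) - g A) := by
  induction T using Finset.induction_on with
  | empty => simp
  | insert y T hy ih =>
    rw [sum_insert hy, union_insert]
    linarith [marginal_antitone hmono hsub (subset_union_left (s₁ := A) (s₂ := T)) y]

theorem sum_sub_sdiff_le_mul {ι : Type*} (hmono : ∀ A B : Finset U, A ⊆ B → g A ≤ g B)
    (hsub : ∀ A B : Finset U, g A + g B ≥ g (A ∪ B) + g (A ∩ B))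
    (D : Finset ι) (B : ι → Finset U) (k : ℕ) (S : Finset U)
    (hcount : ∀ u ∈ S, #(D.filter (fun x => u ∈ B x)) ≤ k) :
    ∑ x ∈ D, (g S - g (S \ B x)) ≤ k * (g S - g ∅) := by
  induction S using Finset.induction_on with
  | empty => simp
  | insert a S ha ih =>
    have hstep : ∀ x ∈ D, g (insert a S) - g (insert a S \ B x)
        ≤ (if a ∈ B x then g (insert a S) - g S else 0) + (g S - g (S \ B x)) := by
      intro x _
      by_cases hax : a ∈ B x
      · rw [insert_sdiff_of_mem S hax, if_pos hax]
        linarith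
      · rw [insert_sdiff_of_notMem S hax, if_neg hax]
        linarith [marginal_antitone hmono hsub (sdiff_subset (s := S) (t := B x)) a]
    have hcard : (#(D.filter (fun x => a ∈ B x)) : ℝ) ≤ k :=
      mod_cast hcount a (mem_insert_self a S)
    have hgrow : 0 ≤ g (insert a S) - g S := sub_nonneg.2 (hmono _ _ (subset_insert a S))
    have hrest := ih fun u hu => hcount u (mem_insert_of_mem hu)
    calc ∑ x ∈ D, (g (insert a S) - g (insert a S \ B x))
        ≤ ∑ x ∈ D, ((if a ∈ B x then g (insert a S) - g S else 0) + (g S - g (S \ B x))) :=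
          sum_le_sum hstep
      _ = #(D.filter (fun x => a ∈ B x)) * (g (insert a S) - g S)
            + ∑ x ∈ D, (g S - g (S \ B x)) := by
          rw [sum_add_distrib, ← sum_filter, sum_const, nsmul_eq_mul]
      _ ≤ k * (g (insert a S) - g S) + k * (g S - g ∅) := by gcongr
      _ = k * (g (insert a S) - g ∅) := by ring

end

theorem stmt_14_general {U : Type*} [DecidableEq U] (g : Finset U → ℝ)
    (hmono : ∀ A B : Finset U, A ⊆ B → g A ≤ g B)
    (hsub : ∀ A B : Finset U, g A + g B ≥ g (A ∪ B) + g (A ∩ B))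
    (hempty : g ∅ = 0)
    (k : ℕ)
    (Sstar St : Finset U) (c : U → ℝ)
    (C : ℝ) (hsum : ∑ x ∈ Sstar \ St, c x ≤ C)
    (ρ : ℝ) (hρ : 0 ≤ ρ)
    (b : U → Finset U)
    (himg : ∀ x ∈ Sstar \ St, b x ⊆ St \ Sstar ∧ (b x).card ≤ k)
    (hcount : ∀ u ∈ St \ Sstar, ((Sstar \ St).filter (fun x => u ∈ b x)).card ≤ k)
    (hswap : ∀ x ∈ Sstar \ St, g (insert x (St \ b x)) - g St ≤ c x * ρ) :
    g Sstar ≤ ((k : ℝ) + 1) * g St + C * ρ := by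
  have hcover : g Sstar ≤ g (St ∪ (Sstar \ St)) :=
    hmono _ _ (union_sdiff_self_eq_union (s := St) (t := Sstar) ▸ subset_union_right)
  have hadd := sub_le_sum_marginal hmono hsub St (Sstar \ St)
  have hexchange : ∀ x ∈ Sstar \ St,
      g (insert x St) - g St ≤ c x * ρ + (g St - g (St \ b x)) := fun x hx => by
    linarith [marginal_antitone hmono hsub (sdiff_subset (s := St) (t := b x)) x, hswap x hx]
  have hcount' : ∀ u ∈ St, #((Sstar \ St).filter (fun x => u ∈ b x)) ≤ k := by
    intro u hu
    by_cases huS : u ∈ Sstar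
    · rw [filter_false_of_mem fun x hx hux => (mem_sdiff.1 ((himg x hx).1 hux)).2 huS]
      exact Nat.zero_le k
    · exact hcount u (mem_sdiff.2 ⟨hu, huS⟩)
  have hloss := sum_sub_sdiff_le_mul hmono hsub (Sstar \ St) b k St hcount'
  have hcost : ∑ x ∈ Sstar \ St, c x * ρ ≤ C * ρ := by
    rw [← sum_mul]
    exact mul_le_mul_of_nonneg_right hsum hρ
  have hgains := sum_le_sum hexchange
  rw [sum_add_distrib] at hgains
  rw [hempty] at hloss
  linarith

/-- Inequality (11), the `k`-matroid greedy-swap bound: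
if every `k`-swap `(x, b x)` has marginal gain at most `c x · ρ` and
`∑_{x ∈ S* \ S_t} c x ≤ C`, then `g(S*) ≤ (k+1)·g(S_t) + C·ρ`. -/
theorem stmt_14 {U : Type*} [Fintype U] [DecidableEq U] (g : Finset U → ℝ)
    (hmono : ∀ A B : Finset U, A ⊆ B → g A ≤ g B)
    (hsub : ∀ A B : Finset U, g A + g B ≥ g (A ∪ B) + g (A ∩ B))
    (hempty : g ∅ = 0)
    (k : ℕ) (hk : 1 ≤ k)
    (Sstar St : Finset U) (c : U → ℝ) (hc : ∀ u, 0 ≤ c u)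
    (C : ℝ) (hC : 0 < C) (hsum : ∑ x ∈ Sstar \ St, c x ≤ C)
    (ρ : ℝ) (hρ : 0 ≤ ρ)
    (b : U → Finset U)
    (himg : ∀ x ∈ Sstar \ St, b x ⊆ St \ Sstar ∧ (b x).card ≤ k)
    (hcount : ∀ u ∈ St \ Sstar, ((Sstar \ St).filter (fun x => u ∈ b x)).card ≤ k)
    (hswap : ∀ x ∈ Sstar \ St, g (insert x (St \ b x)) - g St ≤ c x * ρ) :
    g Sstar ≤ ((k : ℝ) + 1) * g St + C * ρ :=
  stmt_14_general g hmono hsub hempty k Sstar St c C hsum ρ hρ b himg hcount hswap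
end
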